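/- arXiv:1711.06299 — 2 statements merged into one kernel-verified Lean document; each statement's English description precedes it below -/
import Mathlib

section
/- Let ν > 2 and β > 0 be real numbers, and let C(ν) = Γ((ν+1)/2) / (Γ(ν/2)·√(πν)). Then the upper tail integral of the (unnormalized) Student t density satisfies ∫_{β√(ν/(ν−2))}^{∞} C(ν)·(1 + z²/ν)^{−(ν+1)/2} dz ≤ (√(ν(ν−2))/(ν−1)) · (C(ν)/β) · (1 + β²/(ν−2))^{−(ν−1)/2}. -/
/-!
On `(t, ∞)` with `t > 0` one has `1 ≤ z / t`, so the density `(1 + z²/ν)^(-(q+1))` is bounded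
by `z / t` times itself, and `z (1 + z²/ν)^(-(q+1))` has the explicit antiderivative
`-(ν / 2q) (1 + z²/ν)^(-q)`. For the Student density `q = (ν - 1)/2`, and at
`t = β √(ν/(ν-2))` the base becomes `1 + β²/(ν-2)`.
-/

open MeasureTheory Real Set Filter Topology

section PowerTail

variable {ν q : ℝ}

theorem hasDerivAt_one_add_sq_div_rpow_antideriv (hν : 0 < ν) (hq : q ≠ 0) (z : ℝ) :
    HasDerivAt (fun x : ℝ => -(ν / (2 * q)) * (1 + x ^ 2 / ν) ^ (-q))
      (z * (1 + z ^ 2 / ν) ^ (-(q + 1))) z := by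
  have hbase : HasDerivAt (fun x : ℝ => 1 + x ^ 2 / ν) (2 * z ^ 1 / ν) z :=
    ((hasDerivAt_pow 2 z).div_const ν).const_add 1
  refine ((hbase.rpow_const (p := -q) (Or.inl (by positivity))).const_mul _).congr_deriv ?_
  rw [show -q - 1 = -(q + 1) by ring]
  field_simp

theorem tendsto_one_add_sq_div_rpow_neg_atTop (hν : 0 < ν) (hq : 0 < q) :
    Tendsto (fun x : ℝ => (1 + x ^ 2 / ν) ^ (-q)) atTop (𝓝 0) :=
  (tendsto_rpow_neg_atTop hq).comp <|
    tendsto_atTop_add_const_left _ _ ((tendsto_pow_atTop two_ne_zero).atTop_div_const hν)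

theorem tendsto_one_add_sq_div_rpow_antideriv_atTop (hν : 0 < ν) (hq : 0 < q) :
    Tendsto (fun x : ℝ => -(ν / (2 * q)) * (1 + x ^ 2 / ν) ^ (-q)) atTop (𝓝 0) := by
  simpa using (tendsto_one_add_sq_div_rpow_neg_atTop hν hq).const_mul (-(ν / (2 * q)))

theorem integrableOn_Ioi_mul_one_add_sq_div_rpow (hν : 0 < ν) (hq : 0 < q) {t : ℝ}
    (ht : 0 ≤ t) :
    IntegrableOn (fun z : ℝ => z * (1 + z ^ 2 / ν) ^ (-(q + 1))) (Ioi t) :=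
  integrableOn_Ioi_deriv_of_nonneg
    (hasDerivAt_one_add_sq_div_rpow_antideriv hν hq.ne' t).continuousAt.continuousWithinAt
    (fun z _ => hasDerivAt_one_add_sq_div_rpow_antideriv hν hq.ne' z)
    (fun z hz => mul_nonneg (ht.trans hz.out.le) (by positivity))
    (tendsto_one_add_sq_div_rpow_antideriv_atTop hν hq)

theorem integral_Ioi_mul_one_add_sq_div_rpow (hν : 0 < ν) (hq : 0 < q) {t : ℝ}
    (ht : 0 ≤ t) :
    ∫ z in Ioi t, z * (1 + z ^ 2 / ν) ^ (-(q + 1)) = ν / (2 * q) * (1 + t ^ 2 / ν) ^ (-q) := by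
  rw [integral_Ioi_of_hasDerivAt_of_tendsto
    (hasDerivAt_one_add_sq_div_rpow_antideriv hν hq.ne' t).continuousAt.continuousWithinAt
    (fun z _ => hasDerivAt_one_add_sq_div_rpow_antideriv hν hq.ne' z)
    (integrableOn_Ioi_mul_one_add_sq_div_rpow hν hq ht)
    (tendsto_one_add_sq_div_rpow_antideriv_atTop hν hq)]
  ring

theorem integral_Ioi_one_add_sq_div_rpow_le (hν : 0 < ν) (hq : 0 < q) {t : ℝ} (ht : 0 < t) :
    ∫ z in Ioi t, (1 + z ^ 2 / ν) ^ (-(q + 1))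
      ≤ ν / (2 * q * t) * (1 + t ^ 2 / ν) ^ (-q) := by
  have hmajor : IntegrableOn (fun z : ℝ => t⁻¹ * (z * (1 + z ^ 2 / ν) ^ (-(q + 1)))) (Ioi t) :=
    (integrableOn_Ioi_mul_one_add_sq_div_rpow hν hq ht.le).const_mul _
  have hle : ∀ z ∈ Ioi t,
      (1 + z ^ 2 / ν) ^ (-(q + 1)) ≤ t⁻¹ * (z * (1 + z ^ 2 / ν) ^ (-(q + 1))) := by
    intro z hz
    rw [← mul_assoc]
    exact le_mul_of_one_le_left (by positivity)
      ((le_inv_mul_iff₀ ht).mpr (by simpa using hz.out.le))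
  have hcont : Continuous fun z : ℝ => (1 + z ^ 2 / ν) ^ (-(q + 1)) :=
    (continuous_const.add ((continuous_pow 2).div_const ν)).rpow_const
      fun z => Or.inl (by positivity : (0 : ℝ) < 1 + z ^ 2 / ν).ne'
  have hint : IntegrableOn (fun z : ℝ => (1 + z ^ 2 / ν) ^ (-(q + 1))) (Ioi t) := by
    refine hmajor.mono' hcont.aestronglyMeasurable.restrict ?_
    filter_upwards [ae_restrict_mem measurableSet_Ioi] with z hz
    rw [Real.norm_of_nonneg (by positivity)]
    exact hle z hz
  calc ∫ z in Ioi t, (1 + z ^ 2 / ν) ^ (-(q + 1))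
      ≤ ∫ z in Ioi t, t⁻¹ * (z * (1 + z ^ 2 / ν) ^ (-(q + 1))) :=
        setIntegral_mono_on hint hmajor measurableSet_Ioi hle
    _ = ν / (2 * q * t) * (1 + t ^ 2 / ν) ^ (-q) := by
        rw [integral_const_mul, integral_Ioi_mul_one_add_sq_div_rpow hν hq ht.le]
        field_simp

end PowerTail

theorem student_t_one_sided_tail_bound
    (ν β : ℝ) (hν : 2 < ν) (hβ : 0 < β)
    (C : ℝ) (hC : C = Real.Gamma ((ν + 1) / 2) / (Real.Gamma (ν / 2) * Real.sqrt (π * ν))) :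
    ∫ z in Set.Ioi (β * Real.sqrt (ν / (ν - 2))), C * (1 + z ^ 2 / ν) ^ (-((ν + 1) / 2))
      ≤ Real.sqrt (ν * (ν - 2)) / (ν - 1) * (C / β) * (1 + β ^ 2 / (ν - 2)) ^ (-((ν - 1) / 2)) := by
  have hν2 : 0 < ν - 2 := by linarith
  have hC0 : 0 ≤ C := by
    rw [hC]
    exact div_nonneg (Gamma_pos_of_pos (by linarith)).le
      (mul_nonneg (Gamma_pos_of_pos (by linarith)).le (sqrt_nonneg _))
  set t := β * √(ν / (ν - 2)) with ht_def
  have ht : 0 < t := by positivity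
  have hbase : 1 + t ^ 2 / ν = 1 + β ^ 2 / (ν - 2) := by
    rw [ht_def, mul_pow, sq_sqrt (by positivity)]
    field_simp
  have hcoef : ν / (2 * ((ν - 1) / 2) * t) = √(ν * (ν - 2)) / (ν - 1) / β := by
    have hsqrt : √(ν / (ν - 2)) * √(ν * (ν - 2)) = ν := by
      rw [← sqrt_mul (by positivity), show ν / (ν - 2) * (ν * (ν - 2)) = ν ^ 2 by field_simp,
        sqrt_sq (by linarith)]
    have hs0 : √(ν / (ν - 2)) ≠ 0 := by positivity
    have hν1 : ν - 1 ≠ 0 := by linarith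
    rw [ht_def]
    field_simp
    linear_combination -hsqrt
  rw [integral_const_mul, show (ν + 1) / 2 = (ν - 1) / 2 + 1 by ring]
  calc C * ∫ z in Ioi t, (1 + z ^ 2 / ν) ^ (-((ν - 1) / 2 + 1))
      ≤ C * (ν / (2 * ((ν - 1) / 2) * t) * (1 + t ^ 2 / ν) ^ (-((ν - 1) / 2))) := by
        gcongr
        exact integral_Ioi_one_add_sq_div_rpow_le (by linarith) (by linarith) ht
    _ = _ := by rw [hbase, hcoef]; ring
end

section
/- Let ν > 2 and β > 0 be real numbers, and let C(ν) = Γ((ν+1)/2) / (Γ(ν/2)·√(πν)). Then the standard Student t density concentrates as follows: ∫_{{z ∈ ℝ : |z| < β√(ν/(ν−2))}} C(ν)·(1 + z²/ν)^{−(ν+1)/2} dz ≥ 1 − 2·(√(ν(ν−2))/(ν−1)) · (C(ν)/β) · (1 + β²/(ν−2))^{−(ν−1)/2}. -/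
open MeasureTheory Real Set Filter Topology

/-! With `k(z) = (1 + z²/ν)^(-(ν+1)/2)` and `a = β√(ν/(ν-2))`, the mass of `C·k` outside `(-a, a)`
is `2C ∫_a^∞ k`, and on `(a, ∞)` we have `k(z) ≤ (z/a)·k(z)`, where `z·k(z)` has the explicit
primitive `-ν/(ν-1)·(1 + z²/ν)^(-(ν-1)/2)`. Since `a²/ν = β²/(ν-2)`, this is the stated tail term.
That `C·k` has total mass `1` follows from the Beta integral, via the substitution `x = (1 + z²)⁻¹`
on `(0, ∞)`. -/

theorem integral_rpow_mul_one_sub_rpow_eq_Gamma {u v : ℝ} (hu : 0 < u) (hv : 0 < v) :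
    ∫ x in (0:ℝ)..1, x ^ (u - 1) * (1 - x) ^ (v - 1) = Gamma u * Gamma v / Gamma (u + v) := by
  have hbeta : Complex.betaIntegral u v =
      ((∫ x in (0:ℝ)..1, x ^ (u - 1) * (1 - x) ^ (v - 1) : ℝ) : ℂ) := by
    rw [Complex.betaIntegral, ← intervalIntegral.integral_ofReal]
    refine intervalIntegral.integral_congr fun x hx => ?_
    rw [uIcc_of_le zero_le_one] at hx
    push_cast
    rw [Complex.ofReal_cpow hx.1, Complex.ofReal_cpow (sub_nonneg.mpr hx.2)]
    push_cast
    rfl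
  have h := Complex.Gamma_mul_Gamma_eq_betaIntegral (s := u) (t := v)
    (by simpa using hu) (by simpa using hv)
  rw [hbeta, ← Complex.ofReal_add, Complex.Gamma_ofReal, Complex.Gamma_ofReal,
    Complex.Gamma_ofReal, ← Complex.ofReal_mul, ← Complex.ofReal_mul, Complex.ofReal_inj] at h
  rw [h, mul_div_cancel_left₀ _ (Gamma_pos_of_pos (add_pos hu hv)).ne']

lemma hasDerivAt_inv_one_add_sq (z : ℝ) :
    HasDerivAt (fun z : ℝ => (1 + z ^ 2)⁻¹) (-(2 * z) / (1 + z ^ 2) ^ 2) z :=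
  (((hasDerivAt_pow 2 z).const_add 1).inv (by positivity)).congr_deriv (by push_cast; ring)

lemma strictAntiOn_inv_one_add_sq : StrictAntiOn (fun z : ℝ => (1 + z ^ 2)⁻¹) (Ici 0) :=
  fun x hx y _ hxy => by
    have : (0:ℝ) ≤ x := hx
    dsimp only
    gcongr

lemma image_inv_one_add_sq_Ioi : (fun z : ℝ => (1 + z ^ 2)⁻¹) '' Ioi 0 = Ioo 0 1 := by
  ext x
  constructor
  · rintro ⟨z, hz, rfl⟩
    have : (0:ℝ) < z := hz
    exact ⟨by positivity, inv_lt_one_of_one_lt₀ (by nlinarith)⟩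
  · rintro ⟨hx0, hx1⟩
    have hpos : 0 < x⁻¹ - 1 := by linarith [one_lt_inv₀ hx0 |>.mpr hx1]
    exact ⟨√(x⁻¹ - 1), sqrt_pos.mpr hpos, by simp [sq_sqrt hpos.le]⟩

lemma integral_Ioi_one_add_sq_rpow_neg (s : ℝ) :
    ∫ z in Ioi (0:ℝ), (1 + z ^ 2) ^ (-s) =
      1 / 2 * ∫ x in (0:ℝ)..1, x ^ (s - 1 / 2 - 1) * (1 - x) ^ ((1:ℝ) / 2 - 1) := by
  have hchange : ∀ z ∈ Ioi (0:ℝ), |-(2 * z) / (1 + z ^ 2) ^ 2| •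
      ((1 + z ^ 2)⁻¹ ^ (s - 1 / 2 - 1) * (1 - (1 + z ^ 2)⁻¹) ^ ((1:ℝ) / 2 - 1)) =
        2 * (1 + z ^ 2) ^ (-s) := by
    intro z hz
    have hz : (0:ℝ) < z := hz
    have hw : (0:ℝ) < 1 + z ^ 2 := by positivity
    have hcompl : 1 - (1 + z ^ 2)⁻¹ = z ^ 2 * (1 + z ^ 2)⁻¹ := by field_simp; ring
    have hz2 : (z ^ 2) ^ ((1:ℝ) / 2 - 1) = z⁻¹ := by
      rw [show (1:ℝ) / 2 - 1 = -(1 / 2) by norm_num, rpow_neg (by positivity), ← sqrt_eq_rpow,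
        sqrt_sq hz.le]
    have hpow : ∀ w : ℝ, 0 < w → (w ^ (s - 1 / 2 - 1))⁻¹ * (w ^ ((1:ℝ) / 2 - 1))⁻¹ =
        w ^ (-s) * w ^ 2 := fun w hw => by
      rw [← rpow_neg hw.le, ← rpow_neg hw.le, ← rpow_add hw, ← rpow_natCast _ 2, ← rpow_add hw]
      ring_nf
    rw [hcompl, mul_rpow (by positivity) (by positivity), inv_rpow hw.le, inv_rpow hw.le, hz2,
      smul_eq_mul, abs_div, abs_neg, abs_of_pos (by positivity), abs_of_pos (by positivity)]
    calc 2 * z / (1 + z ^ 2) ^ 2 * (((1 + z ^ 2) ^ (s - 1 / 2 - 1))⁻¹ *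
          (z⁻¹ * ((1 + z ^ 2) ^ ((1:ℝ) / 2 - 1))⁻¹))
        = 2 * (((1 + z ^ 2) ^ (s - 1 / 2 - 1))⁻¹ * ((1 + z ^ 2) ^ ((1:ℝ) / 2 - 1))⁻¹) /
          (1 + z ^ 2) ^ 2 := by field_simp
      _ = 2 * (1 + z ^ 2) ^ (-s) := by rw [hpow _ hw]; field_simp
  rw [intervalIntegral.integral_of_le zero_le_one, integral_Ioc_eq_integral_Ioo,
    ← image_inv_one_add_sq_Ioi,
    integral_image_eq_integral_abs_deriv_smul measurableSet_Ioi
      (fun z _ => (hasDerivAt_inv_one_add_sq z).hasDerivWithinAt)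
      (strictAntiOn_inv_one_add_sq.mono Ioi_subset_Ici_self).injOn,
    setIntegral_congr_fun measurableSet_Ioi hchange, integral_const_mul]
  ring

theorem integral_one_add_sq_rpow_neg {s : ℝ} (hs : 1 / 2 < s) :
    ∫ z : ℝ, (1 + z ^ 2) ^ (-s) = √π * Gamma (s - 1 / 2) / Gamma s := by
  have heven := integral_comp_abs (f := fun z : ℝ => (1 + z ^ 2) ^ (-s))
  simp only [sq_abs] at heven
  rw [heven, integral_Ioi_one_add_sq_rpow_neg,
    integral_rpow_mul_one_sub_rpow_eq_Gamma (by linarith) one_half_pos, sub_add_cancel,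
    Gamma_one_half_eq]
  ring

lemma setIntegral_Ioi_le_integral_mul_div {f : ℝ → ℝ} {a : ℝ} (ha : 0 < a)
    (hf : IntegrableOn f (Ioi a)) (hf' : IntegrableOn (fun z => z * f z) (Ioi a))
    (hf0 : ∀ z ∈ Ioi a, 0 ≤ f z) :
    ∫ z in Ioi a, f z ≤ (∫ z in Ioi a, z * f z) / a := by
  rw [le_div_iff₀ ha, ← integral_mul_const]
  refine setIntegral_mono_on (hf.mul_const a) hf' measurableSet_Ioi fun z hz => ?_
  rw [mul_comm]
  exact mul_le_mul_of_nonneg_right hz.out.le (hf0 z hz)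

lemma setIntegral_abs_lt_eq_integral_sub {f : ℝ → ℝ} (hf : Integrable f)
    (heven : ∀ z, f (-z) = f z) {a : ℝ} (ha : 0 < a) :
    ∫ z in {z | |z| < a}, f z = (∫ z, f z) - 2 * ∫ z in Ioi a, f z := by
  have hcompl : {z : ℝ | |z| < a}ᶜ = Iic (-a) ∪ Ici a := by
    ext z
    simp only [mem_compl_iff, mem_ofPred_eq, abs_lt, not_and_or, not_lt, mem_union, mem_Iic,
      mem_Ici]
  have hdisj : Disjoint (Iic (-a)) (Ici a) :=
    Iic_disjoint_Ici.mpr (by linarith)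
  have hleft : ∫ z in Iic (-a), f z = ∫ z in Ioi a, f z := by
    rw [← neg_neg a, ← integral_comp_neg_Iic]
    simp only [heven, neg_neg]
  have h : (∫ z in {z | |z| < a}, f z) + ∫ z in {z | |z| < a}ᶜ, f z = ∫ z, f z :=
    integral_add_compl (measurableSet_lt measurable_abs measurable_const) hf
  have hright : ∫ z in Ici a, f z = ∫ z in Ioi a, f z := integral_Ici_eq_integral_Ioi
  rw [hcompl, setIntegral_union hdisj measurableSet_Ici hf.integrableOn hf.integrableOn, hleft,
    hright] at h
  linarith

noncomputable def studentTKernel (ν z : ℝ) : ℝ := (1 + z ^ 2 / ν) ^ (-((ν + 1) / 2))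

lemma studentTKernel_eq_one_add_sq_div_sqrt (ν : ℝ) (hν : 0 < ν) (z : ℝ) :
    studentTKernel ν z = (1 + (z / √ν) ^ 2) ^ (-((ν + 1) / 2)) := by
  rw [studentTKernel, div_pow, sq_sqrt hν.le]

lemma studentTKernel_nonneg (ν z : ℝ) (hν : 0 ≤ ν) : 0 ≤ studentTKernel ν z :=
  rpow_nonneg (by positivity) _

lemma studentTKernel_neg (ν z : ℝ) : studentTKernel ν (-z) = studentTKernel ν z := by
  simp [studentTKernel]

section StudentTKernel

variable {ν : ℝ}

lemma integrable_studentTKernel (hν : 0 < ν) : Integrable (studentTKernel ν) := by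
  have h := (integrable_rpow_neg_one_add_norm_sq (E := ℝ) (μ := volume) (r := ν + 1)
    (by simpa using hν)).comp_div (sqrt_pos.mpr hν).ne'
  convert h using 2 with z
  rw [studentTKernel_eq_one_add_sq_div_sqrt ν hν, norm_eq_abs, sq_abs, neg_div]

lemma integral_studentTKernel (hν : 0 < ν) :
    ∫ z, studentTKernel ν z = √(π * ν) * Gamma (ν / 2) / Gamma ((ν + 1) / 2) := by
  simp_rw [studentTKernel_eq_one_add_sq_div_sqrt ν hν]
  rw [Measure.integral_comp_div (fun z => (1 + z ^ 2) ^ (-((ν + 1) / 2))),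
    integral_one_add_sq_rpow_neg (by linarith), abs_of_pos (sqrt_pos.mpr hν), smul_eq_mul,
    sqrt_mul pi_pos.le]
  ring_nf

lemma hasDerivAt_studentTKernel_primitive (hν : 1 < ν) (z : ℝ) :
    HasDerivAt (fun z => -(ν / (ν - 1)) * (1 + z ^ 2 / ν) ^ (-((ν - 1) / 2)))
      (z * studentTKernel ν z) z := by
  have hν0 : 0 < ν := by linarith
  have hbase : HasDerivAt (fun y : ℝ => 1 + y ^ 2 / ν) (2 * z / ν) z := by
    simpa using ((hasDerivAt_pow 2 z).div_const ν).const_add 1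
  refine ((hbase.rpow_const (Or.inl (by positivity))).const_mul _).congr_deriv ?_
  rw [studentTKernel, show -((ν - 1) / 2) - 1 = -((ν + 1) / 2) by ring]
  field_simp [show ν - 1 ≠ 0 by linarith]

lemma tendsto_studentTKernel_primitive_atTop (hν : 1 < ν) :
    Tendsto (fun z => -(ν / (ν - 1)) * (1 + z ^ 2 / ν) ^ (-((ν - 1) / 2))) atTop (𝓝 0) := by
  have hbase : Tendsto (fun z : ℝ => 1 + z ^ 2 / ν) atTop atTop :=
    tendsto_atTop_add_const_left _ _
      ((tendsto_pow_atTop two_ne_zero).atTop_div_const (by linarith))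
  simpa using ((tendsto_rpow_neg_atTop (by linarith)).comp hbase).const_mul (-(ν / (ν - 1)))

lemma mul_studentTKernel_nonneg {a : ℝ} (hν : 0 ≤ ν) (ha : 0 ≤ a) :
    ∀ z ∈ Ioi a, 0 ≤ z * studentTKernel ν z :=
  fun z hz => mul_nonneg (ha.trans hz.out.le) (studentTKernel_nonneg ν z hν)

lemma integral_Ioi_mul_studentTKernel {a : ℝ} (hν : 1 < ν) (ha : 0 ≤ a) :
    ∫ z in Ioi a, z * studentTKernel ν z = ν / (ν - 1) * (1 + a ^ 2 / ν) ^ (-((ν - 1) / 2)) := by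
  rw [integral_Ioi_of_hasDerivAt_of_nonneg' (fun z _ => hasDerivAt_studentTKernel_primitive hν z)
    (mul_studentTKernel_nonneg (by linarith) ha) (tendsto_studentTKernel_primitive_atTop hν)]
  ring

lemma integrableOn_Ioi_mul_studentTKernel {a : ℝ} (hν : 1 < ν) (ha : 0 ≤ a) :
    IntegrableOn (fun z => z * studentTKernel ν z) (Ioi a) :=
  integrableOn_Ioi_deriv_of_nonneg' (fun z _ => hasDerivAt_studentTKernel_primitive hν z)
    (mul_studentTKernel_nonneg (by linarith) ha) (tendsto_studentTKernel_primitive_atTop hν)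

lemma setIntegral_Ioi_studentTKernel_le {a : ℝ} (hν : 1 < ν) (ha : 0 < a) :
    ∫ z in Ioi a, studentTKernel ν z ≤ ν / (ν - 1) * (1 + a ^ 2 / ν) ^ (-((ν - 1) / 2)) / a := by
  rw [← integral_Ioi_mul_studentTKernel hν ha.le]
  exact setIntegral_Ioi_le_integral_mul_div ha
    (integrable_studentTKernel (by linarith)).integrableOn
    (integrableOn_Ioi_mul_studentTKernel hν ha.le)
    fun z _ => studentTKernel_nonneg ν z (by linarith)

lemma sub_le_setIntegral_abs_lt_studentTKernel {a C : ℝ} (hν : 1 < ν) (ha : 0 < a) (hC0 : 0 ≤ C)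
    (hmass : C * ∫ z, studentTKernel ν z = 1) :
    1 - 2 * C * (ν / (ν - 1)) * (1 + a ^ 2 / ν) ^ (-((ν - 1) / 2)) / a ≤
      ∫ z in {z | |z| < a}, C * studentTKernel ν z := by
  rw [integral_const_mul, setIntegral_abs_lt_eq_integral_sub
    (integrable_studentTKernel (by linarith)) (studentTKernel_neg ν) ha, mul_sub, hmass]
  have htail := mul_le_mul_of_nonneg_left (setIntegral_Ioi_studentTKernel_le hν ha) hC0
  linear_combination 2 * htail

end StudentTKernel

theorem student_t_two_sided_concentration
    (ν β : ℝ) (hν : 2 < ν) (hβ : 0 < β)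
    (C : ℝ) (hC : C = Real.Gamma ((ν + 1) / 2) / (Real.Gamma (ν / 2) * Real.sqrt (π * ν))) :
    1 - 2 * (Real.sqrt (ν * (ν - 2)) / (ν - 1)) * (C / β) * (1 + β ^ 2 / (ν - 2)) ^ (-((ν - 1) / 2))
      ≤ ∫ z in {z : ℝ | |z| < β * Real.sqrt (ν / (ν - 2))},
          C * (1 + z ^ 2 / ν) ^ (-((ν + 1) / 2)) := by
  have hν0 : 0 < ν := by linarith
  have hν2 : 0 < ν - 2 := by linarith
  set a := β * √(ν / (ν - 2)) with ha_def
  have ha : 0 < a := mul_pos hβ (sqrt_pos.mpr (by positivity))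
  have ha2 : a ^ 2 / ν = β ^ 2 / (ν - 2) := by
    rw [mul_pow, sq_sqrt (by positivity)]
    field_simp
  have hcoef : √(ν * (ν - 2)) = β * ν / a := by
    rw [eq_div_iff ha.ne', sqrt_mul hν0.le, ha_def, sqrt_div hν0.le]
    field_simp
    exact sq_sqrt hν0.le
  have hmass : C * ∫ z, studentTKernel ν z = 1 := by
    rw [integral_studentTKernel hν0, hC]
    field_simp
  have h := sub_le_setIntegral_abs_lt_studentTKernel (by linarith) ha (by rw [hC]; positivity) hmass
  rw [ha2] at h
  refine le_of_eq_of_le ?_ h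
  rw [hcoef]
  field_simp
end
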